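/- arXiv:1102.3952 — 5 statements merged into one kernel-verified Lean document; each statement's English description precedes it below -/
import Mathlib

section
/- The following identity of ℤ-linear endomorphisms of M_n holds: E1⁺∘F1⁺ + E1⁻∘F1⁻ + F1⁺∘E1⁻ + F1⁻∘E1⁺ + H1⁻ = E1⁺∘F1⁻ + E1⁻∘F1⁺ + F1⁺∘E1⁺ + F1⁻∘E1⁻ + H1⁺. (Decategorified content of Theorem 3.4(2)(a), lifting the relation e_1 f_1 − f_1 e_1 = h_1.) -/
/-- The free `ℤ`-module on the sequences `a : Fin n → Fin 8`, modelling the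
Grothendieck group `K(𝒪ⁿ)` with basis the classes `b_a` of Verma modules. -/
abbrev GrGroup (n : ℕ) : Type := (Fin n → Fin 8) →₀ ℤ

/-- The basis element `b_a` of the Grothendieck group model. -/
noncomputable def bclass {n : ℕ} (a : Fin n → Fin 8) : GrGroup n := Finsupp.single a 1

/-- The integers `c₁(a), c₂(a), c₃(a)` attached to a sequence `a : Fin n → Fin 8`:
`c₁(a) = #{m : aₘ ∈ {4,5}} − #{m : aₘ ∈ {2,3}}`,
`c₂(a) = #{m : aₘ ∈ {2,6}} − #{m : aₘ ∈ {1,5}}`,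
`c₃(a) = #{m : aₘ odd} − #{m : aₘ even}`. -/
def cseq {n : ℕ} : Fin 3 → (Fin n → Fin 8) → ℤ
  | 0, a => ((Finset.univ.filter fun m => a m = 4 ∨ a m = 5).card : ℤ) -
      ((Finset.univ.filter fun m => a m = 2 ∨ a m = 3).card : ℤ)
  | 1, a => ((Finset.univ.filter fun m => a m = 2 ∨ a m = 6).card : ℤ) -
      ((Finset.univ.filter fun m => a m = 1 ∨ a m = 5).card : ℤ)
  | 2, a => ((Finset.univ.filter fun m => (a m : ℕ) % 2 = 1).card : ℤ) -
      ((Finset.univ.filter fun m => (a m : ℕ) % 2 = 0).card : ℤ)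

/-- `Hᵢ⁺` acts on the basis element `b_a` by the scalar `max(cᵢ(a), 0)`. -/
noncomputable def Hplus (n : ℕ) (i : Fin 3) : GrGroup n →ₗ[ℤ] GrGroup n :=
  Finsupp.lift (GrGroup n) ℤ (Fin n → Fin 8) (fun a => max (cseq i a) 0 • bclass a)

/-- `Hᵢ⁻` acts on the basis element `b_a` by the scalar `max(−cᵢ(a), 0)`. -/
noncomputable def Hminus (n : ℕ) (i : Fin 3) : GrGroup n →ₗ[ℤ] GrGroup n :=
  Finsupp.lift (GrGroup n) ℤ (Fin n → Fin 8) (fun a => max (-cseq i a) 0 • bclass a)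

/-- `E₁⁺ b_a = Σ_{m : aₘ∈{2,3}} b_{a[m↦aₘ+2]}
+ Σ_{i<j : {aᵢ,aⱼ}={2,3} or {3,4}} b_{a[i↦aᵢ+1][j↦aⱼ+1]}`. -/
noncomputable def E1plus (n : ℕ) : GrGroup n →ₗ[ℤ] GrGroup n :=
  Finsupp.lift (GrGroup n) ℤ (Fin n → Fin 8) (fun a =>
    (∑ m : Fin n, if a m = 2 ∨ a m = 3 then
        bclass (Function.update a m (a m + 2)) else 0) +
    ∑ i : Fin n, ∑ j : Fin n,
      if i < j ∧ ((a i = 2 ∧ a j = 3) ∨ (a i = 3 ∧ a j = 2) ∨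
          (a i = 3 ∧ a j = 4) ∨ (a i = 4 ∧ a j = 3)) then
        bclass (Function.update (Function.update a i (a i + 1)) j (a j + 1)) else 0)

/-- `E₁⁻ b_a = Σ_{i<j : {aᵢ,aⱼ}={2,3} or {3,4}} b_{a[i↦aᵢ+1][j↦aⱼ+1]}`. -/
noncomputable def E1minus (n : ℕ) : GrGroup n →ₗ[ℤ] GrGroup n :=
  Finsupp.lift (GrGroup n) ℤ (Fin n → Fin 8) (fun a =>
    ∑ i : Fin n, ∑ j : Fin n,
      if i < j ∧ ((a i = 2 ∧ a j = 3) ∨ (a i = 3 ∧ a j = 2) ∨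
          (a i = 3 ∧ a j = 4) ∨ (a i = 4 ∧ a j = 3)) then
        bclass (Function.update (Function.update a i (a i + 1)) j (a j + 1)) else 0)


/-- `F₁⁺ b_a = Σ_{m : aₘ∈{4,5}} b_{a[m↦aₘ−2]}
+ Σ_{i<j : {aᵢ,aⱼ}={3,4} or {4,5}} b_{a[i↦aᵢ−1][j↦aⱼ−1]}`. -/
noncomputable def F1plus (n : ℕ) : GrGroup n →ₗ[ℤ] GrGroup n :=
  Finsupp.lift (GrGroup n) ℤ (Fin n → Fin 8) (fun a =>
    (∑ m : Fin n, if a m = 4 ∨ a m = 5 then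
        bclass (Function.update a m (a m - 2)) else 0) +
    ∑ i : Fin n, ∑ j : Fin n,
      if i < j ∧ ((a i = 3 ∧ a j = 4) ∨ (a i = 4 ∧ a j = 3) ∨
          (a i = 4 ∧ a j = 5) ∨ (a i = 5 ∧ a j = 4)) then
        bclass (Function.update (Function.update a i (a i - 1)) j (a j - 1)) else 0)

/-- `F₁⁻ b_a = Σ_{i<j : {aᵢ,aⱼ}={3,4} or {4,5}} b_{a[i↦aᵢ−1][j↦aⱼ−1]}`. -/
noncomputable def F1minus (n : ℕ) : GrGroup n →ₗ[ℤ] GrGroup n :=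
  Finsupp.lift (GrGroup n) ℤ (Fin n → Fin 8) (fun a =>
    ∑ i : Fin n, ∑ j : Fin n,
      if i < j ∧ ((a i = 3 ∧ a j = 4) ∨ (a i = 4 ∧ a j = 3) ∨
          (a i = 4 ∧ a j = 5) ∨ (a i = 5 ∧ a j = 4)) then
        bclass (Function.update (Function.update a i (a i - 1)) j (a j - 1)) else 0)

/-! Write `E₁⁺ = S + E₁⁻` and `F₁⁺ = T + F₁⁻`, where `S` moves one letter `2, 3` up to `4, 5` and
`T` moves one letter `4, 5` down to `2, 3`. Expanding, all terms involving `E₁⁻` or `F₁⁻` cancel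
and the identity becomes `ST − TS = H₁⁺ − H₁⁻`. In `ST b_a` and `TS b_a` the terms moving two
different positions agree, because moves at different positions commute; moving the same position
twice returns `b_a`, once for each letter `4, 5` in `ST` and once for each letter `2, 3` in `TS`.
So `ST − TS` acts on `b_a` by `c₁(a) = max(c₁(a), 0) − max(−c₁(a), 0)`. -/

open Finset

section Operators

variable {R : Type*} [Ring R]

noncomputable def diagOp {β : Type*} (w : β → R) : (β →₀ R) →ₗ[R] (β →₀ R) :=
  Finsupp.lift (β →₀ R) R β fun b => w b • Finsupp.single b 1

theorem diagOp_single {β : Type*} (w : β → R) (b : β) :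
    diagOp w (Finsupp.single b 1) = w b • Finsupp.single b 1 := by
  simp only [diagOp, Finsupp.lift_apply, Finsupp.sum_single_index, zero_smul, one_smul]

theorem diagOp_sub {β : Type*} (w₁ w₂ : β → R) : diagOp w₁ - diagOp w₂ = diagOp (w₁ - w₂) := by
  ext b : 2
  simp [diagOp_single, sub_smul]

variable {ι α : Type*} [DecidableEq ι]
variable (p q : α → Prop) [DecidablePred p] [DecidablePred q] (φ ψ : α → α)

/-- The basis vector reached from `a` by the `(q, ψ)`-move at position `m'` followed by the
`(p, φ)`-move at position `m`, or `0` if one of the moves is not defined. -/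
noncomputable def hopTerm (a : ι → α) (m' m : ι) : (ι → α) →₀ R :=
  if q (a m') ∧ p (Function.update a m' (ψ (a m')) m) then
    Finsupp.single (Function.update (Function.update a m' (ψ (a m'))) m
      (φ (Function.update a m' (ψ (a m')) m))) 1
  else 0

theorem hopTerm_of_ne (a : ι → α) {m m' : ι} (hm : m ≠ m') :
    hopTerm (R := R) p q φ ψ a m' m = hopTerm q p ψ φ a m m' := by
  simp only [hopTerm, Function.update_of_ne hm, Function.update_of_ne hm.symm,
    Function.update_comm hm.symm, and_comm]

theorem hopTerm_self (hqp : ∀ x, q x → p (ψ x) ∧ φ (ψ x) = x) (a : ι → α) (m : ι) :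
    hopTerm (R := R) p q φ ψ a m m = if q (a m) then Finsupp.single a 1 else 0 := by
  by_cases h : q (a m)
  · simp [hopTerm, h, (hqp _ h).1, (hqp _ h).2]
  · simp [hopTerm, h]

variable [Fintype ι]

noncomputable def siteOp : ((ι → α) →₀ R) →ₗ[R] ((ι → α) →₀ R) :=
  Finsupp.lift ((ι → α) →₀ R) R (ι → α) fun a =>
    ∑ m, if p (a m) then Finsupp.single (Function.update a m (φ (a m))) 1 else 0

theorem siteOp_single (a : ι → α) :
    siteOp (R := R) p φ (Finsupp.single a 1) =
      ∑ m, if p (a m) then Finsupp.single (Function.update a m (φ (a m))) 1 else 0 := by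
  simp only [siteOp, Finsupp.lift_apply, Finsupp.sum_single_index, zero_smul, one_smul]

theorem siteOp_siteOp_single (a : ι → α) :
    siteOp (R := R) p φ (siteOp q ψ (Finsupp.single a 1)) = ∑ m', ∑ m, hopTerm p q φ ψ a m' m := by
  rw [siteOp_single, map_sum]
  refine sum_congr rfl fun m' _ => ?_
  split_ifs with h <;> simp [hopTerm, h, siteOp_single]

theorem siteOp_commutator (hpq : ∀ x, p x → q (φ x) ∧ ψ (φ x) = x)
    (hqp : ∀ x, q x → p (ψ x) ∧ φ (ψ x) = x) :
    siteOp (R := R) (ι := ι) p φ ∘ₗ siteOp q ψ - siteOp q ψ ∘ₗ siteOp p φ =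
      diagOp fun a => (#{m | q (a m)} : R) - #{m | p (a m)} := by
  ext a : 2
  simp only [LinearMap.sub_apply, LinearMap.comp_apply, Finsupp.lsingle_apply, diagOp_single,
    siteOp_siteOp_single]
  have hdiag : ∀ m', ∑ m, hopTerm p q φ ψ a m' m - ∑ m, hopTerm (R := R) q p ψ φ a m m' =
      (if q (a m') then Finsupp.single a 1 else 0) - if p (a m') then Finsupp.single a 1 else 0 := by
    intro m'
    rw [← sum_sub_distrib, Fintype.sum_eq_single m' fun m hm => by
      rw [hopTerm_of_ne p q φ ψ a hm, sub_self], hopTerm_self p q φ ψ hqp,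
      hopTerm_self q p ψ φ hpq]
  rw [sum_comm (f := fun m m' => hopTerm q p ψ φ a m m'), ← sum_sub_distrib,
    sum_congr rfl fun m' _ => hdiag m', sum_sub_distrib, ← sum_filter, ← sum_filter, sum_const,
    sum_const, ← Nat.cast_smul_eq_nsmul R, ← Nat.cast_smul_eq_nsmul R, sub_smul]

end Operators

theorem add_relation_of_sub_eq {A : Type*} [Ring A] {e f e' f' s t h h' : A}
    (he : e = s + e') (hf : f = t + f') (hst : s * t - t * s = h - h') :
    e * f + e' * f' + f * e' + f' * e + h' = e * f' + e' * f + f * e + f' * e' + h := by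
  subst he hf
  rw [← sub_eq_zero]
  calc _ = s * t - t * s - (h - h') := by noncomm_ring
    _ = 0 := by rw [hst, sub_self]

theorem E1plus_eq_siteOp_add (n : ℕ) :
    E1plus n = siteOp (fun x : Fin 8 => x = 2 ∨ x = 3) (· + 2) + E1minus n := by
  rw [E1plus, E1minus, siteOp, ← map_add]
  rfl

theorem F1plus_eq_siteOp_add (n : ℕ) :
    F1plus n = siteOp (fun x : Fin 8 => x = 4 ∨ x = 5) (· - 2) + F1minus n := by
  rw [F1plus, F1minus, siteOp, ← map_add]
  rfl

theorem Hplus_sub_Hminus_zero (n : ℕ) : Hplus n 0 - Hminus n 0 = diagOp (cseq 0) := by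
  rw [show Hplus n 0 = diagOp fun a => max (cseq 0 a) 0 from rfl,
    show Hminus n 0 = diagOp fun a => max (-cseq 0 a) 0 from rfl, diagOp_sub]
  exact congrArg diagOp (funext fun a => max_zero_sub_eq_self (cseq 0 a))

theorem siteOp_commutator_eq_cseq_zero (n : ℕ) :
    siteOp (ι := Fin n) (fun x : Fin 8 => x = 2 ∨ x = 3) (· + 2) ∘ₗ
        siteOp (fun x : Fin 8 => x = 4 ∨ x = 5) (· - 2) -
      siteOp (fun x : Fin 8 => x = 4 ∨ x = 5) (· - 2) ∘ₗ
        siteOp (fun x : Fin 8 => x = 2 ∨ x = 3) (· + 2) = diagOp (R := ℤ) (cseq 0) := by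
  rw [siteOp_commutator _ _ _ _ (by decide) (by decide)]
  rfl

theorem EF1_relation_general (n : ℕ) :
    E1plus n ∘ₗ F1plus n + E1minus n ∘ₗ F1minus n +
        F1plus n ∘ₗ E1minus n + F1minus n ∘ₗ E1plus n + Hminus n 0 =
      E1plus n ∘ₗ F1minus n + E1minus n ∘ₗ F1plus n +
        F1plus n ∘ₗ E1plus n + F1minus n ∘ₗ E1minus n + Hplus n 0 := by
  have hcomm := (siteOp_commutator_eq_cseq_zero n).trans (Hplus_sub_Hminus_zero n).symm
  exact add_relation_of_sub_eq (A := Module.End ℤ (GrGroup n))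
    (E1plus_eq_siteOp_add n) (F1plus_eq_siteOp_add n) hcomm

/-- Decategorified Theorem 3.4(2)(a):
`E₁⁺∘F₁⁺ + E₁⁻∘F₁⁻ + F₁⁺∘E₁⁻ + F₁⁻∘E₁⁺ + H₁⁻ = E₁⁺∘F₁⁻ + E₁⁻∘F₁⁺ + F₁⁺∘E₁⁺ + F₁⁻∘E₁⁻ + H₁⁺`,
lifting the relation `e₁f₁ − f₁e₁ = h₁`. -/
theorem EF1_relation (n : ℕ) (hn : 0 < n) :
    E1plus n ∘ₗ F1plus n + E1minus n ∘ₗ F1minus n +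
        F1plus n ∘ₗ E1minus n + F1minus n ∘ₗ E1plus n + Hminus n 0 =
      E1plus n ∘ₗ F1minus n + E1minus n ∘ₗ F1plus n +
        F1plus n ∘ₗ E1plus n + F1minus n ∘ₗ E1minus n + Hplus n 0 :=
  EF1_relation_general n
end

section
/- For all i, j ∈ {2,3}, the following identity of ℤ-linear endomorphisms of M_n holds: Ei∘Fj + δ_{ij}·Hi⁻ = Fj∘Ei + δ_{ij}·Hi⁺, where δ_{ij} is the Kronecker delta. (Decategorified content of Theorem 3.4(2)(d), lifting the relations e_i f_j − f_j e_i = δ_{ij} h_i for i,j ∈ {2,3}.) -/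
/-- `E₂ b_a = Σ_{m : aₘ∈{1,5}} b_{a[m↦aₘ+1]}` and
`E₃ b_a = Σ_{m : aₘ∈{0,2,4,6}} b_{a[m↦aₘ+1]}` (indexed by `2` and `3`). -/
noncomputable def Eop23 (n : ℕ) : Fin 2 → (GrGroup n →ₗ[ℤ] GrGroup n)
  | 0 => Finsupp.lift (GrGroup n) ℤ (Fin n → Fin 8) (fun a =>
      ∑ m : Fin n, if a m = 1 ∨ a m = 5 then
        bclass (Function.update a m (a m + 1)) else 0)
  | 1 => Finsupp.lift (GrGroup n) ℤ (Fin n → Fin 8) (fun a =>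
      ∑ m : Fin n, if a m = 0 ∨ a m = 2 ∨ a m = 4 ∨ a m = 6 then
        bclass (Function.update a m (a m + 1)) else 0)

/-- `F₂ b_a = Σ_{m : aₘ∈{2,6}} b_{a[m↦aₘ−1]}` and
`F₃ b_a = Σ_{m : aₘ∈{1,3,5,7}} b_{a[m↦aₘ−1]}` (indexed by `2` and `3`). -/
noncomputable def Fop23 (n : ℕ) : Fin 2 → (GrGroup n →ₗ[ℤ] GrGroup n)
  | 0 => Finsupp.lift (GrGroup n) ℤ (Fin n → Fin 8) (fun a =>
      ∑ m : Fin n, if a m = 2 ∨ a m = 6 then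
        bclass (Function.update a m (a m - 1)) else 0)
  | 1 => Finsupp.lift (GrGroup n) ℤ (Fin n → Fin 8) (fun a =>
      ∑ m : Fin n, if a m = 1 ∨ a m = 3 ∨ a m = 5 ∨ a m = 7 then
        bclass (Function.update a m (a m - 1)) else 0)
/-!
Both `Eᵢ Fⱼ b_a` and `Fⱼ Eᵢ b_a` are sums over ordered pairs of sites `(m, m')`, one move at
each. Moves at distinct sites commute, so those terms cancel in the commutator; when `m = m'` the
second move undoes the first and returns `b_a`. Hence `Fⱼ Eᵢ − Eᵢ Fⱼ` is diagonal, with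
eigenvalue on `b_a` the number of sites that can move up-then-down minus the number that can move
down-then-up. For `i ≠ j` both numbers vanish; for `i = j` they are the two counts defining
`cᵢ(a)`, and `max(−c, 0) − max(c, 0) = −c`.
-/

open Finset Function

namespace SiteOp

variable {ι α R : Type*} [Ring R]

noncomputable def diag (c : (ι → α) → R) : ((ι → α) →₀ R) →ₗ[R] ((ι → α) →₀ R) :=
  Finsupp.lift _ R _ fun a => c a • Finsupp.single a 1

theorem diag_single (c : (ι → α) → R) (a : ι → α) :
    diag c (Finsupp.single a 1) = c a • Finsupp.single a 1 := by
  rw [diag, Finsupp.lift_apply, Finsupp.sum_single_index (by simp), one_smul]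

theorem diag_sub (c d : (ι → α) → R) : diag c - diag d = diag (c - d) := by
  refine Finsupp.lhom_ext' fun a => LinearMap.ext_ring ?_
  simp [diag_single, sub_smul]

theorem diag_zero : diag (fun _ => 0 : (ι → α) → R) = 0 := by
  refine Finsupp.lhom_ext' fun a => LinearMap.ext_ring ?_
  simp [diag_single]

variable [DecidableEq ι] (p q : α → Prop) [DecidablePred p] [DecidablePred q] (s t : α → α)

/-- The term of `move q t (move p s (single a 1))` in which site `m` moves first, then site `m'`. -/
noncomputable def twoMoves (a : ι → α) (m m' : ι) : (ι → α) →₀ R :=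
  if p (a m) ∧ q (update a m (s (a m)) m') then
    Finsupp.single (update (update a m (s (a m))) m' (t (update a m (s (a m)) m'))) 1
  else 0

theorem twoMoves_of_ne (a : ι → α) {m m' : ι} (h : m ≠ m') :
    (twoMoves p q s t a m m' : (ι → α) →₀ R) = twoMoves q p t s a m' m := by
  simp only [twoMoves, update_of_ne h, update_of_ne h.symm, update_comm h, and_comm]

theorem twoMoves_self (hts : ∀ x, p x → q (s x) → t (s x) = x) (a : ι → α) (m : ι) :
    (twoMoves p q s t a m m : (ι → α) →₀ R) =
      if p (a m) ∧ q (s (a m)) then Finsupp.single a 1 else 0 := by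
  simp only [twoMoves, update_self, update_idem]
  split_ifs with h
  · rw [hts _ h.1 h.2, update_eq_self]
  · rfl

variable [Fintype ι]

noncomputable def move : ((ι → α) →₀ R) →ₗ[R] ((ι → α) →₀ R) :=
  Finsupp.lift _ R _ fun a =>
    ∑ m, if p (a m) then Finsupp.single (update a m (s (a m))) 1 else 0

theorem move_single (a : ι → α) :
    move p s (Finsupp.single a (1 : R)) =
      ∑ m, if p (a m) then Finsupp.single (update a m (s (a m))) 1 else 0 := by
  rw [move, Finsupp.lift_apply, Finsupp.sum_single_index (by simp), one_smul]

theorem move_move_single (a : ι → α) :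
    move q t (move p s (Finsupp.single a (1 : R))) = ∑ m, ∑ m', twoMoves p q s t a m m' := by
  rw [move_single, map_sum]
  refine sum_congr rfl fun m _ => ?_
  by_cases hm : p (a m)
  · simp [move_single, twoMoves, hm]
  · simp [twoMoves, hm]

theorem sum_twoMoves (hts : ∀ x, p x → q (s x) → t (s x) = x) (a : ι → α) :
    (∑ m, ∑ m', twoMoves p q s t a m m' : (ι → α) →₀ R) =
      (#{m | p (a m) ∧ q (s (a m))} : R) • Finsupp.single a 1 +
        ∑ x ∈ univ.offDiag, twoMoves p q s t a x.1 x.2 := by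
  rw [← sum_product', ← diag_union_offDiag (s := (univ : Finset ι)),
    sum_union (disjoint_diag_offDiag _), sum_diag]
  simp only [twoMoves_self p q s t hts, sum_ite, sum_const_zero, add_zero, sum_const,
    Nat.cast_smul_eq_nsmul]

theorem sum_offDiag_twoMoves_swap (a : ι → α) :
    (∑ x ∈ univ.offDiag, twoMoves p q s t a x.1 x.2 : (ι → α) →₀ R) =
      ∑ x ∈ univ.offDiag, twoMoves q p t s a x.1 x.2 := by
  refine sum_nbij' Prod.swap Prod.swap ?_ ?_ (fun _ _ => rfl) (fun _ _ => rfl) ?_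
  · simp [eq_comm]
  · simp [eq_comm]
  · intro x hx
    exact twoMoves_of_ne p q s t a (mem_offDiag.mp hx).2.2

theorem move_comp_move_sub (hts : ∀ x, p x → q (s x) → t (s x) = x)
    (hst : ∀ x, q x → p (t x) → s (t x) = x) :
    (move q t ∘ₗ move p s - move p s ∘ₗ move q t : ((ι → α) →₀ R) →ₗ[R] _) =
      (diag fun a => (#{m | p (a m) ∧ q (s (a m))} : R) - #{m | q (a m) ∧ p (t (a m))}) := by
  refine Finsupp.lhom_ext' fun a => LinearMap.ext_ring ?_
  simp only [LinearMap.sub_apply, LinearMap.comp_apply, Finsupp.lsingle_apply,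
    move_move_single, sum_twoMoves _ _ _ _ hts, sum_twoMoves _ _ _ _ hst,
    sum_offDiag_twoMoves_swap p q s t, diag_single, sub_smul]
  abel

theorem move_comp_move_sub_of_mapsTo (hpq : ∀ x, p x → q (s x)) (hqp : ∀ x, q x → p (t x))
    (hts : ∀ x, p x → t (s x) = x) (hst : ∀ x, q x → s (t x) = x) :
    (move q t ∘ₗ move p s - move p s ∘ₗ move q t : ((ι → α) →₀ R) →ₗ[R] _) =
      diag fun a => (#{m | p (a m)} : R) - #{m | q (a m)} := by
  rw [move_comp_move_sub p q s t (fun x hp _ => hts x hp) (fun x hq _ => hst x hq)]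
  simp only [and_iff_left_of_imp (hpq _), and_iff_left_of_imp (hqp _)]

theorem move_comp_move_comm (hpq : ∀ x, p x → ¬q (s x)) (hqp : ∀ x, q x → ¬p (t x)) :
    (move q t ∘ₗ move p s : ((ι → α) →₀ R) →ₗ[R] _) = move p s ∘ₗ move q t := by
  rw [← sub_eq_zero, move_comp_move_sub p q s t (fun x hp hq => absurd hq (hpq x hp))
    (fun x hq hp => absurd hp (hqp x hq))]
  have hpq' : ∀ x, ¬(p x ∧ q (s x)) := fun x h => hpq x h.1 h.2
  have hqp' : ∀ x, ¬(q x ∧ p (t x)) := fun x h => hqp x h.1 h.2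
  simp only [hpq', hqp', filter_false, card_empty, Nat.cast_zero, sub_self, diag_zero]

end SiteOp

open SiteOp

theorem Eop23_zero_eq_move (n : ℕ) : Eop23 n 0 = move (fun x => x = 1 ∨ x = 5) (· + 1) := rfl

theorem Eop23_one_eq_move (n : ℕ) :
    Eop23 n 1 = move (fun x => x = 0 ∨ x = 2 ∨ x = 4 ∨ x = 6) (· + 1) := rfl

theorem Fop23_zero_eq_move (n : ℕ) : Fop23 n 0 = move (fun x => x = 2 ∨ x = 6) (· - 1) := rfl

theorem Fop23_one_eq_move (n : ℕ) :
    Fop23 n 1 = move (fun x => x = 1 ∨ x = 3 ∨ x = 5 ∨ x = 7) (· - 1) := rfl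

theorem Hminus_sub_Hplus (n : ℕ) (i : Fin 3) :
    Hminus n i - Hplus n i = diag fun a => -cseq i a := by
  change diag (fun a => max (-cseq i a) 0) - diag (fun a => max (cseq i a) 0) = _
  rw [diag_sub]
  congr 1; funext a
  simpa using max_zero_sub_max_neg_zero_eq_self (-cseq i a)

theorem Fop23_comp_Eop23_sub (n : ℕ) (i j : Fin 2) :
    Fop23 n j ∘ₗ Eop23 n i - Eop23 n i ∘ₗ Fop23 n j =
      if i = j then Hminus n i.succ - Hplus n i.succ else 0 := by
  match i, j with
  | 0, 0 =>
    rw [if_pos rfl, Hminus_sub_Hplus, Eop23_zero_eq_move, Fop23_zero_eq_move,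
      move_comp_move_sub_of_mapsTo _ _ _ _ (by decide) (by decide) (by decide) (by decide)]
    congr 1; funext a
    simp [cseq]
  | 0, 1 =>
    rw [if_neg (by decide), sub_eq_zero, Eop23_zero_eq_move, Fop23_one_eq_move,
      move_comp_move_comm _ _ _ _ (by decide) (by decide)]
  | 1, 0 =>
    rw [if_neg (by decide), sub_eq_zero, Eop23_one_eq_move, Fop23_zero_eq_move,
      move_comp_move_comm _ _ _ _ (by decide) (by decide)]
  | 1, 1 =>
    rw [if_pos rfl, Hminus_sub_Hplus, Eop23_one_eq_move, Fop23_one_eq_move,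
      move_comp_move_sub_of_mapsTo _ _ _ _ (by decide) (by decide) (by decide) (by decide)]
    congr 1; funext a
    have even_iff : ∀ x : Fin 8, (x = 0 ∨ x = 2 ∨ x = 4 ∨ x = 6) ↔ (x : ℕ) % 2 = 0 := by decide
    have odd_iff : ∀ x : Fin 8, (x = 1 ∨ x = 3 ∨ x = 5 ∨ x = 7) ↔ (x : ℕ) % 2 = 1 := by decide
    simp [cseq, even_iff, odd_iff]

theorem EF23_relation_general (n : ℕ) (i j : Fin 2) :
    Eop23 n i ∘ₗ Fop23 n j + (if i = j then Hminus n i.succ else 0) =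
      Fop23 n j ∘ₗ Eop23 n i + (if i = j then Hplus n i.succ else 0) := by
  have h := Fop23_comp_Eop23_sub n i j
  split_ifs at h ⊢
  · rw [sub_eq_sub_iff_add_eq_add] at h
    rw [h, add_comm]
  · rw [sub_eq_zero] at h
    rw [h]

/-- Decategorified Theorem 3.4(2)(d): for `i, j ∈ {2,3}` (indexed by `Fin 2`, with
`i.succ : Fin 3` the corresponding index of `Hᵢ`),
`Eᵢ∘Fⱼ + δᵢⱼ Hᵢ⁻ = Fⱼ∘Eᵢ + δᵢⱼ Hᵢ⁺`, lifting `eᵢfⱼ − fⱼeᵢ = δᵢⱼ hᵢ`. -/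
theorem EF23_relation (n : ℕ) (hn : 0 < n) (i j : Fin 2) :
    Eop23 n i ∘ₗ Fop23 n j + (if i = j then Hminus n i.succ else 0) =
      Fop23 n j ∘ₗ Eop23 n i + (if i = j then Hplus n i.succ else 0) :=
  EF23_relation_general n i j
end

section
/- The following identity of ℤ-linear endomorphisms of M_n holds: H1⁺∘E1⁺ + H1⁻∘E1⁻ + E1⁺∘H1⁻ + E1⁻∘H1⁺ + 2·E1⁻ = H1⁺∘E1⁻ + H1⁻∘E1⁺ + E1⁺∘H1⁺ + E1⁻∘H1⁻ + 2·E1⁺. (Decategorified content of Theorem 3.4(3)(a), lifting the relation h_1 e_1 − e_1 h_1 = 2e_1.) -/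
/-!
Both `H₁⁺` and `H₁⁻` are diagonal in the basis `b_a`, acting on the `c₁`-weight space of weight `k`
by `max k 0` and `max (-k) 0`, while every basis vector occurring in `E₁^± b_a` has `c₁`-weight
`c₁(a) + 2`. On `b_a` each side is therefore a combination of `E₁⁺ b_a` and `E₁⁻ b_a`, and the
coefficients agree because `max t 0 - max (-t) 0 = t` at `t = c₁(a)` and `t = c₁(a) + 2`.
-/

section WeightSpace

variable {α : Type*} (c : α → ℤ)

def weightSpace (k : ℤ) : Submodule ℤ (α →₀ ℤ) :=
  Finsupp.supported ℤ ℤ (c ⁻¹' {k})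

noncomputable def diagonalOp (φ : ℤ → ℤ) : (α →₀ ℤ) →ₗ[ℤ] (α →₀ ℤ) :=
  Finsupp.lift (α →₀ ℤ) ℤ α (fun a => φ (c a) • Finsupp.single a 1)

theorem diagonalOp_apply_of_mem_weightSpace (φ : ℤ → ℤ) {k : ℤ} {x : α →₀ ℤ}
    (hx : x ∈ weightSpace c k) : diagonalOp c φ x = φ k • x := by
  have hck : ∀ a ∈ x.support, c a = k := fun a ha => hx ha
  calc diagonalOp c φ x = x.sum fun a r => r • φ (c a) • Finsupp.single a 1 := by
        simp only [diagonalOp, Finsupp.lift_apply]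
    _ = x.sum fun a r => φ k • Finsupp.single a r := by
        refine Finsupp.sum_congr fun a ha => ?_
        rw [hck a ha, smul_comm, Finsupp.smul_single_one]
    _ = φ k • x := by rw [← Finsupp.smul_sum, Finsupp.sum_single]

end WeightSpace

theorem Fintype.sum_comp_update {ι β M : Type*} [Fintype ι] [DecidableEq ι] [AddCommGroup M]
    (w : β → M) (a : ι → β) (m : ι) (k : β) :
    ∑ x, w (Function.update a m k x) = ∑ x, w (a x) + (w k - w (a m)) := by
  rw [← Function.comp_def, Function.comp_update, Finset.sum_update_of_mem (Finset.mem_univ m),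
    ← Finset.add_sum_erase _ _ (Finset.mem_univ m), Finset.sdiff_singleton_eq_erase]
  simp only [Function.comp_apply]
  abel

def c1Weight (v : Fin 8) : ℤ :=
  (if v = 4 ∨ v = 5 then 1 else 0) - (if v = 2 ∨ v = 3 then 1 else 0)

section

variable {n : ℕ}

theorem Hplus_eq_diagonalOp (i : Fin 3) : Hplus n i = diagonalOp (cseq i) (fun t => max t 0) :=
  rfl

theorem Hminus_eq_diagonalOp (i : Fin 3) :
    Hminus n i = diagonalOp (cseq i) (fun t => max (-t) 0) :=
  rfl

theorem cseq_zero_eq_sum (a : Fin n → Fin 8) : cseq 0 a = ∑ m, c1Weight (a m) := by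
  simp only [cseq, c1Weight, Finset.sum_sub_distrib, Finset.sum_boole]

theorem cseq_zero_update (a : Fin n → Fin 8) (m : Fin n) (k : Fin 8) :
    cseq 0 (Function.update a m k) = cseq 0 a + (c1Weight k - c1Weight (a m)) := by
  simp only [cseq_zero_eq_sum, Fintype.sum_comp_update]

theorem cseq_zero_update_add_two (a : Fin n → Fin 8) (m : Fin n) (h : a m = 2 ∨ a m = 3) :
    cseq 0 (Function.update a m (a m + 2)) = cseq 0 a + 2 := by
  have key : ∀ v : Fin 8, v = 2 ∨ v = 3 → c1Weight (v + 2) - c1Weight v = 2 := by decide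
  rw [cseq_zero_update, key _ h]

theorem cseq_zero_update_update (a : Fin n → Fin 8) {i j : Fin n} (hij : i ≠ j)
    (h : (a i = 2 ∧ a j = 3) ∨ (a i = 3 ∧ a j = 2) ∨ (a i = 3 ∧ a j = 4) ∨ (a i = 4 ∧ a j = 3)) :
    cseq 0 (Function.update (Function.update a i (a i + 1)) j (a j + 1)) = cseq 0 a + 2 := by
  have key : ∀ u v : Fin 8,
      (u = 2 ∧ v = 3) ∨ (u = 3 ∧ v = 2) ∨ (u = 3 ∧ v = 4) ∨ (u = 4 ∧ v = 3) →
      c1Weight (u + 1) - c1Weight u + (c1Weight (v + 1) - c1Weight v) = 2 := by decide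
  rw [cseq_zero_update, cseq_zero_update, Function.update_of_ne hij.symm, add_assoc, key _ _ h]

theorem lift_bclass (g : (Fin n → Fin 8) → GrGroup n) (a : Fin n → Fin 8) :
    Finsupp.lift (GrGroup n) ℤ (Fin n → Fin 8) g (bclass a) = g a := by
  simp [bclass]

theorem bclass_mem_weightSpace (a : Fin n → Fin 8) :
    bclass a ∈ weightSpace (cseq 0) (cseq 0 a) :=
  Finsupp.single_mem_supported ℤ 1 rfl

theorem E1minus_bclass_mem_weightSpace (a : Fin n → Fin 8) :
    E1minus n (bclass a) ∈ weightSpace (cseq 0) (cseq 0 a + 2) := by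
  rw [E1minus, lift_bclass]
  refine Submodule.sum_mem _ fun i _ => Submodule.sum_mem _ fun j _ => ?_
  split_ifs with h
  · exact Finsupp.single_mem_supported ℤ 1 (cseq_zero_update_update a h.1.ne h.2)
  · exact Submodule.zero_mem _

theorem E1plus_bclass (a : Fin n → Fin 8) :
    E1plus n (bclass a) = (∑ m, if a m = 2 ∨ a m = 3 then
        bclass (Function.update a m (a m + 2)) else 0) + E1minus n (bclass a) := by
  rw [E1plus, E1minus, lift_bclass, lift_bclass]

theorem E1plus_bclass_mem_weightSpace (a : Fin n → Fin 8) :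
    E1plus n (bclass a) ∈ weightSpace (cseq 0) (cseq 0 a + 2) := by
  rw [E1plus_bclass]
  refine Submodule.add_mem _ (Submodule.sum_mem _ fun m _ => ?_)
    (E1minus_bclass_mem_weightSpace a)
  split_ifs with h
  · exact Finsupp.single_mem_supported ℤ 1 (cseq_zero_update_add_two a m h)
  · exact Submodule.zero_mem _

end

theorem HE1_relation_general (n : ℕ) :
    Hplus n 0 ∘ₗ E1plus n + Hminus n 0 ∘ₗ E1minus n +
        E1plus n ∘ₗ Hminus n 0 + E1minus n ∘ₗ Hplus n 0 + 2 • E1minus n =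
      Hplus n 0 ∘ₗ E1minus n + Hminus n 0 ∘ₗ E1plus n +
        E1plus n ∘ₗ Hplus n 0 + E1minus n ∘ₗ Hminus n 0 + 2 • E1plus n := by
  refine Finsupp.lhom_ext' fun a => LinearMap.ext_ring ?_
  simp only [LinearMap.comp_apply, LinearMap.add_apply, LinearMap.smul_apply,
    Finsupp.lsingle_apply, Hplus_eq_diagonalOp, Hminus_eq_diagonalOp]
  rw [show Finsupp.single a (1 : ℤ) = bclass a from rfl]
  simp only [map_smul, diagonalOp_apply_of_mem_weightSpace _ _ (bclass_mem_weightSpace a),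
    diagonalOp_apply_of_mem_weightSpace _ _ (E1plus_bclass_mem_weightSpace a),
    diagonalOp_apply_of_mem_weightSpace _ _ (E1minus_bclass_mem_weightSpace a)]
  have hc := max_zero_sub_max_neg_zero_eq_self (cseq 0 a)
  have hc₂ := max_zero_sub_max_neg_zero_eq_self (cseq 0 a + 2)
  match_scalars <;> linarith

/-- Decategorified Theorem 3.4(3)(a):
`H₁⁺∘E₁⁺ + H₁⁻∘E₁⁻ + E₁⁺∘H₁⁻ + E₁⁻∘H₁⁺ + 2E₁⁻ = H₁⁺∘E₁⁻ + H₁⁻∘E₁⁺ + E₁⁺∘H₁⁺ + E₁⁻∘H₁⁻ + 2E₁⁺`,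
lifting the relation `h₁e₁ − e₁h₁ = 2e₁`. -/
theorem HE1_relation (n : ℕ) (hn : 0 < n) :
    Hplus n 0 ∘ₗ E1plus n + Hminus n 0 ∘ₗ E1minus n +
        E1plus n ∘ₗ Hminus n 0 + E1minus n ∘ₗ Hplus n 0 + 2 • E1minus n =
      Hplus n 0 ∘ₗ E1minus n + Hminus n 0 ∘ₗ E1plus n +
        E1plus n ∘ₗ Hplus n 0 + E1minus n ∘ₗ Hminus n 0 + 2 • E1plus n :=
  HE1_relation_general n
end

section
/- For each i ∈ {2,3}, the following identity of ℤ-linear endomorphisms of M_n holds: Hi⁺∘F1⁺ + Hi⁻∘F1⁻ + F1⁺∘Hi⁻ + F1⁻∘Hi⁺ + (−a_{i1})·F1⁻ = Hi⁺∘F1⁻ + Hi⁻∘F1⁺ + F1⁺∘Hi⁺ + F1⁻∘Hi⁻ + (−a_{i1})·F1⁺, where a_{21} = −1 and a_{31} = 0 are Cartan matrix entries of type B_3. (Decategorified content of Theorem 3.4(4)(b), lifting the relations h_i f_1 − f_1 h_i = −a_{i1} f_1.) -/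
/-- The Cartan matrix entries `a₂₁ = −1` and `a₃₁ = 0` of type `B₃`
(indexed by `Fin 2`, standing for the rows `i = 2, 3`). -/
def cartanB3_col1 : Fin 2 → ℤ := ![-1, 0]

/-!
The difference `F₁⁺ − F₁⁻` is the single-entry part `b_a ↦ Σ_{aₘ∈{4,5}} b_{a[m↦aₘ−2]}`, and
`Hᵢ⁺ − Hᵢ⁻` acts diagonally on `b_a` by `cᵢ(a)`, since `max(c,0) − max(−c,0) = c`. Expanding,
the identity is equivalent to the commutator relation `[Hᵢ⁺ − Hᵢ⁻, F₁⁺ − F₁⁻] = −aᵢ₁ (F₁⁺ − F₁⁻)`.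
Each `cᵢ` is a sum of per-entry weights, and lowering one entry from `4` or `5` to `2` or `3`
changes `c₂` by `+1` and `c₃` by `0`, which are exactly `−a₂₁` and `−a₃₁`.
-/

theorem add_eq_add_of_commutator_eq {R : Type*} [Ring R] {hp hm fp fm : R} {t : ℤ}
    (h : (hp - hm) * (fp - fm) - (fp - fm) * (hp - hm) = t • (fp - fm)) :
    hp * fp + hm * fm + fp * hm + fm * hp + t • fm =
      hp * fm + hm * fp + fp * hp + fm * hm + t • fp := by
  rw [← sub_eq_zero, ← sub_eq_zero.mpr h]
  simp only [mul_sub, sub_mul, smul_sub]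
  abel

theorem Fintype.sum_update_eq_sub_add {ι M : Type*} [Fintype ι] [DecidableEq ι]
    [AddCommGroup M] (g : ι → M) (m : ι) (v : M) : ∑ x, Function.update g m v x = ∑ x, g x - g m + v := by
  rw [Finset.sum_update_of_mem (Finset.mem_univ m),
    ← Finset.add_sum_erase _ _ (Finset.mem_univ m), Finset.sdiff_singleton_eq_erase]
  abel

def cseqWeight : Fin 3 → Fin 8 → ℤ
  | 0, x => (if x = 4 ∨ x = 5 then 1 else 0) - (if x = 2 ∨ x = 3 then 1 else 0)
  | 1, x => (if x = 2 ∨ x = 6 then 1 else 0) - (if x = 1 ∨ x = 5 then 1 else 0)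
  | 2, x => (if (x : ℕ) % 2 = 1 then 1 else 0) - (if (x : ℕ) % 2 = 0 then 1 else 0)

theorem cseq_eq_sum_cseqWeight {n : ℕ} (i : Fin 3) (a : Fin n → Fin 8) :
    cseq i a = ∑ m, cseqWeight i (a m) := by
  fin_cases i <;> simp [cseq, cseqWeight, Finset.sum_sub_distrib, Finset.sum_boole]

theorem cseq_update {n : ℕ} (i : Fin 3) (a : Fin n → Fin 8) (m : Fin n) (k : Fin 8) :
    cseq i (Function.update a m k) = cseq i a - cseqWeight i (a m) + cseqWeight i k := by
  simp only [cseq_eq_sum_cseqWeight, ← Function.comp_apply (f := cseqWeight i),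
    Function.comp_update, Fintype.sum_update_eq_sub_add]

theorem cseqWeight_sub_two (i : Fin 2) {x : Fin 8} (hx : x = 4 ∨ x = 5) :
    cseqWeight i.succ (x - 2) = cseqWeight i.succ x - cartanB3_col1 i := by
  rcases hx with rfl | rfl <;> fin_cases i <;> decide

theorem GrGroup.lhom_ext {n : ℕ} {f g : GrGroup n →ₗ[ℤ] GrGroup n}
    (h : ∀ a, f (bclass a) = g (bclass a)) : f = g :=
  Finsupp.lhom_ext' fun a => LinearMap.ext_ring (h a)

theorem lift_apply_bclass {n : ℕ} (φ : (Fin n → Fin 8) → GrGroup n) (a : Fin n → Fin 8) :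
    Finsupp.lift (GrGroup n) ℤ (Fin n → Fin 8) φ (bclass a) = φ a := by
  rw [bclass, Finsupp.lift_apply, Finsupp.sum_single_index (zero_smul ℤ (φ a)), one_smul]

theorem Hplus_sub_Hminus_bclass {n : ℕ} (i : Fin 3) (a : Fin n → Fin 8) :
    (Hplus n i - Hminus n i) (bclass a) = cseq i a • bclass a := by
  rw [LinearMap.sub_apply, Hplus, Hminus, lift_apply_bclass, lift_apply_bclass, ← sub_smul,
    max_zero_sub_max_neg_zero_eq_self]

theorem F1plus_sub_F1minus_bclass {n : ℕ} (a : Fin n → Fin 8) :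
    (F1plus n - F1minus n) (bclass a) = ∑ m : Fin n,
      if a m = 4 ∨ a m = 5 then bclass (Function.update a m (a m - 2)) else 0 := by
  rw [LinearMap.sub_apply, F1plus, F1minus, lift_apply_bclass, lift_apply_bclass,
    add_sub_cancel_right]

theorem commutator_Hplus_sub_Hminus_F1plus_sub_F1minus (n : ℕ) (i : Fin 2) :
    (Hplus n i.succ - Hminus n i.succ) ∘ₗ (F1plus n - F1minus n) -
        (F1plus n - F1minus n) ∘ₗ (Hplus n i.succ - Hminus n i.succ) =
      (-cartanB3_col1 i) • (F1plus n - F1minus n) := by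
  refine GrGroup.lhom_ext fun a => ?_
  rw [LinearMap.sub_apply, LinearMap.comp_apply, LinearMap.comp_apply, LinearMap.smul_apply,
    Hplus_sub_Hminus_bclass, map_smul, F1plus_sub_F1minus_bclass, map_sum, Finset.smul_sum,
    Finset.smul_sum, ← Finset.sum_sub_distrib]
  refine Finset.sum_congr rfl fun m _ => ?_
  split_ifs with hm
  · rw [Hplus_sub_Hminus_bclass, cseq_update, cseqWeight_sub_two i hm, ← sub_smul]
    congr 1
    ring
  · simp

theorem HF1_relation_general (n : ℕ) (i : Fin 2) :
    Hplus n i.succ ∘ₗ F1plus n + Hminus n i.succ ∘ₗ F1minus n +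
        F1plus n ∘ₗ Hminus n i.succ + F1minus n ∘ₗ Hplus n i.succ +
        (-cartanB3_col1 i) • F1minus n =
      Hplus n i.succ ∘ₗ F1minus n + Hminus n i.succ ∘ₗ F1plus n +
        F1plus n ∘ₗ Hplus n i.succ + F1minus n ∘ₗ Hminus n i.succ +
        (-cartanB3_col1 i) • F1plus n := by
  exact add_eq_add_of_commutator_eq (commutator_Hplus_sub_Hminus_F1plus_sub_F1minus n i)

/-- Decategorified Theorem 3.4(4)(b): for `i ∈ {2,3}` (indexed by `Fin 2`, with
`i.succ : Fin 3` the corresponding index of `Hᵢ`),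
`Hᵢ⁺∘F₁⁺ + Hᵢ⁻∘F₁⁻ + F₁⁺∘Hᵢ⁻ + F₁⁻∘Hᵢ⁺ + (−aᵢ₁)F₁⁻ =
 Hᵢ⁺∘F₁⁻ + Hᵢ⁻∘F₁⁺ + F₁⁺∘Hᵢ⁺ + F₁⁻∘Hᵢ⁻ + (−aᵢ₁)F₁⁺`,
lifting the relation `hᵢf₁ − f₁hᵢ = −aᵢ₁ f₁`. -/
theorem HF1_relation (n : ℕ) (hn : 0 < n) (i : Fin 2) :
    Hplus n i.succ ∘ₗ F1plus n + Hminus n i.succ ∘ₗ F1minus n +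
        F1plus n ∘ₗ Hminus n i.succ + F1minus n ∘ₗ Hplus n i.succ +
        (-cartanB3_col1 i) • F1minus n =
      Hplus n i.succ ∘ₗ F1minus n + Hminus n i.succ ∘ₗ F1plus n +
        F1plus n ∘ₗ Hplus n i.succ + F1minus n ∘ₗ Hminus n i.succ +
        (-cartanB3_col1 i) • F1plus n :=
  HF1_relation_general n i
end

section
/- The following identity of ℤ-linear endomorphisms of M_n holds: F3∘F3∘F3∘F2 + 3·(F3∘F2∘F3∘F3) = 3·(F3∘F3∘F2∘F3) + F2∘F3∘F3∘F3. (Decategorified content of Theorem 3.4(6)(e), lifting the Serre relation f_3³f_2 − 3f_3²f_2f_3 + 3f_3f_2f_3² − f_2f_3³ = 0.) -/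
/-- `F₂ b_a = Σ_{m : aₘ∈{2,6}} b_{a[m↦aₘ−1]}`. -/
noncomputable def F2op (n : ℕ) : GrGroup n →ₗ[ℤ] GrGroup n :=
  Finsupp.lift (GrGroup n) ℤ (Fin n → Fin 8) (fun a =>
    ∑ m : Fin n, if a m = 2 ∨ a m = 6 then
      bclass (Function.update a m (a m - 1)) else 0)

/-- `F₃ b_a = Σ_{m : aₘ∈{1,3,5,7}} b_{a[m↦aₘ−1]}`. -/
noncomputable def F3op (n : ℕ) : GrGroup n →ₗ[ℤ] GrGroup n :=
  Finsupp.lift (GrGroup n) ℤ (Fin n → Fin 8) (fun a =>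
    ∑ m : Fin n, if a m = 1 ∨ a m = 3 ∨ a m = 5 ∨ a m = 7 then
      bclass (Function.update a m (a m - 1)) else 0)

open Function

theorem sum_mul_sum_sub_sum_mul_sum_of_commute {ι B : Type*} [Ring B] (s : Finset ι)
    (u v : ι → B) (h : ∀ i j, i ≠ j → Commute (u i) (v j)) :
    (∑ i ∈ s, u i) * (∑ i ∈ s, v i) - (∑ i ∈ s, v i) * (∑ i ∈ s, u i) =
      ∑ i ∈ s, (u i * v i - v i * u i) := by
  rw [Finset.sum_mul_sum, Finset.sum_mul_sum, Finset.sum_comm (s := s) (f := fun i j => v i * u j),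
    ← Finset.sum_sub_distrib]
  refine Finset.sum_congr rfl fun i hi => ?_
  rw [← Finset.sum_sub_distrib]
  exact Finset.sum_eq_single_of_mem i hi fun j _ hji => sub_eq_zero.2 (h i j hji.symm)

theorem ad_ad_ad_eq_zero_of_mul_self_eq_zero {A : Type*} [Ring A] {g : A} (hg : g * g = 0)
    (x : A) :
    g * (g * (g * x - x * g) - (g * x - x * g) * g) -
      (g * (g * x - x * g) - (g * x - x * g) * g) * g = 0 :=
  calc _ = g * g * (g * x) - 3 • (g * g * x * g) + 3 • (g * x * (g * g)) - x * g * (g * g) := by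
        noncomm_ring
    _ = 0 := by simp [hg]

theorem serre_of_map_mul_sub_mul {A B : Type*} [Ring A] [Ring B] (φ : A →+ B)
    (hφ : ∀ a b, φ (a * b - b * a) = φ a * φ b - φ b * φ a) {g : A} (hg : g * g = 0) (x : A) :
    φ g * (φ g * (φ g * φ x)) + 3 • (φ g * (φ x * (φ g * φ g))) =
      3 • (φ g * (φ g * (φ x * φ g))) + φ x * (φ g * (φ g * φ g)) := by
  have hφad := congrArg φ (ad_ad_ad_eq_zero_of_mul_self_eq_zero hg x)
  rw [hφ, hφ, hφ, map_zero] at hφad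
  rw [← sub_eq_zero, ← hφad]
  noncomm_ring

section MoveMatrix

variable {S R : Type*} [DecidableEq S] [Semiring R] (p : S → Prop) [DecidablePred p] (f : S → S)

def moveMatrix : Matrix S S R :=
  Matrix.of fun k j => if p j ∧ k = f j then 1 else 0

theorem moveMatrix_mul_self [Fintype S] (h : ∀ j, p j → ¬ p (f j)) :
    moveMatrix p f * moveMatrix p f = (0 : Matrix S S R) := by
  ext k j
  simp only [moveMatrix, Matrix.mul_apply, Matrix.of_apply, Matrix.zero_apply]
  refine Finset.sum_eq_zero fun l _ => ?_
  split_ifs with hkl hlj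
  · exact absurd (hlj.2 ▸ hkl.1) (h j hlj.1)
  all_goals simp

end MoveMatrix

section TensorAction

variable {ι S R : Type*} [DecidableEq ι] [Fintype S] [CommRing R]

noncomputable def siteAction (m : ι) : Matrix S S R →ₗ[R] Module.End R ((ι → S) →₀ R) where
  toFun M := Finsupp.lift _ R (ι → S) fun a => ∑ k, M k (a m) • Finsupp.single (update a m k) 1
  map_add' M N := by
    ext a : 2
    simp [add_smul, Finset.sum_add_distrib]
  map_smul' c M := by
    ext a : 2
    simp only [LinearMap.comp_apply, Finsupp.lsingle_apply, Finsupp.lift_apply,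
      LinearMap.smul_apply, RingHom.id_apply]
    rw [Finsupp.sum_single_index (by simp), Finsupp.sum_single_index (by simp)]
    simp only [one_smul, Matrix.smul_apply, Finset.smul_sum, smul_assoc]

theorem siteAction_single (m : ι) (M : Matrix S S R) (a : ι → S) :
    siteAction m M (Finsupp.single a 1) = ∑ k, M k (a m) • Finsupp.single (update a m k) 1 := by
  simp [siteAction]

theorem siteAction_mul [DecidableEq S] (m : ι) (M N : Matrix S S R) :
    siteAction m (M * N) = siteAction m M * siteAction m N := by
  ext a : 2
  simp only [LinearMap.comp_apply, Finsupp.lsingle_apply, Module.End.mul_apply, siteAction_single,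
    map_sum, map_smul, update_self, update_idem, Finset.smul_sum, smul_smul]
  rw [Finset.sum_comm]
  simp only [Matrix.mul_apply, Finset.sum_smul, mul_comm]

theorem commute_siteAction_siteAction {m m' : ι} (h : m ≠ m') (M N : Matrix S S R) :
    Commute (siteAction m M) (siteAction m' N) := by
  ext a : 2
  simp only [LinearMap.comp_apply, Finsupp.lsingle_apply, Module.End.mul_apply, siteAction_single,
    map_sum, map_smul, update_of_ne h, update_of_ne h.symm, Finset.smul_sum, smul_smul]
  rw [Finset.sum_comm]
  simp only [mul_comm, update_comm h]

variable [Fintype ι]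

noncomputable def tensorAction : Matrix S S R →ₗ[R] Module.End R ((ι → S) →₀ R) :=
  ∑ m, siteAction m

theorem tensorAction_apply (M : Matrix S S R) : tensorAction M = ∑ m : ι, siteAction m M :=
  LinearMap.sum_apply _ _ _

theorem tensorAction_single (M : Matrix S S R) (a : ι → S) :
    tensorAction M (Finsupp.single a (1 : R)) =
      ∑ m, ∑ k, M k (a m) • Finsupp.single (update a m k) 1 := by
  simp only [tensorAction_apply, LinearMap.sum_apply, siteAction_single]

-- `B` is given explicitly: for a general `R`, subtraction on `Module.End R (_ →₀ R)` agrees with the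
-- one of its ring structure only after unfolding instances, and inferring `B` times out.
theorem tensorAction_mul_sub_mul [DecidableEq S] (M N : Matrix S S R) :
    tensorAction (ι := ι) (M * N - N * M) =
      tensorAction M * tensorAction N - tensorAction N * tensorAction M := by
  rw [tensorAction_apply, tensorAction_apply, tensorAction_apply]
  calc ∑ m, siteAction m (M * N - N * M)
      = ∑ m, (siteAction m M * siteAction m N - siteAction m N * siteAction m M) :=
        Finset.sum_congr rfl fun m _ => by rw [map_sub, siteAction_mul, siteAction_mul]
    _ = _ := (sum_mul_sum_sub_sum_mul_sum_of_commute (B := Module.End R ((ι → S) →₀ R)) _ _ _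
          fun _ _ h => commute_siteAction_siteAction h M N).symm

theorem tensorAction_moveMatrix [DecidableEq S] (p : S → Prop) [DecidablePred p] (f : S → S) :
    tensorAction (moveMatrix p f) = Finsupp.lift _ R (ι → S) fun a =>
      ∑ m, if p (a m) then Finsupp.single (update a m (f (a m))) 1 else 0 := by
  ext a : 2
  simp only [LinearMap.comp_apply, Finsupp.lsingle_apply, tensorAction_single]
  rw [Finsupp.lift_apply, Finsupp.sum_single_index (by simp), one_smul]
  refine Finset.sum_congr rfl fun m _ => ?_
  by_cases hm : p (a m) <;> simp [moveMatrix, hm]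

end TensorAction

def f2Matrix : Matrix (Fin 8) (Fin 8) ℤ := moveMatrix (fun j => j = 2 ∨ j = 6) (· - 1)

def f3Matrix : Matrix (Fin 8) (Fin 8) ℤ :=
  moveMatrix (fun j => j = 1 ∨ j = 3 ∨ j = 5 ∨ j = 7) (· - 1)

theorem f3Matrix_mul_self : f3Matrix * f3Matrix = 0 :=
  moveMatrix_mul_self _ _ (by decide)

theorem F2op_eq_tensorAction (n : ℕ) : F2op n = tensorAction f2Matrix := by
  rw [f2Matrix, tensorAction_moveMatrix]
  rfl

theorem F3op_eq_tensorAction (n : ℕ) : F3op n = tensorAction f3Matrix := by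
  rw [f3Matrix, tensorAction_moveMatrix]
  rfl

theorem serre_F3F2_relation_general (n : ℕ) :
    F3op n ∘ₗ F3op n ∘ₗ F3op n ∘ₗ F2op n + 3 • (F3op n ∘ₗ F2op n ∘ₗ F3op n ∘ₗ F3op n) =
      3 • (F3op n ∘ₗ F3op n ∘ₗ F2op n ∘ₗ F3op n) + F2op n ∘ₗ F3op n ∘ₗ F3op n ∘ₗ F3op n := by
  have h := serre_of_map_mul_sub_mul (tensorAction (ι := Fin n)).toAddMonoidHom
    tensorAction_mul_sub_mul f3Matrix_mul_self f2Matrix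
  simp only [LinearMap.toAddMonoidHom_coe, ← F2op_eq_tensorAction, ← F3op_eq_tensorAction] at h
  simpa only [Module.End.mul_eq_comp] using h

/-- Decategorified Theorem 3.4(6)(e):
`F₃∘F₃∘F₃∘F₂ + 3(F₃∘F₂∘F₃∘F₃) = 3(F₃∘F₃∘F₂∘F₃) + F₂∘F₃∘F₃∘F₃`,
lifting the Serre relation `f₃³f₂ − 3f₃²f₂f₃ + 3f₃f₂f₃² − f₂f₃³ = 0`. -/
theorem serre_F3F2_relation (n : ℕ) (hn : 0 < n) :
    F3op n ∘ₗ F3op n ∘ₗ F3op n ∘ₗ F2op n + 3 • (F3op n ∘ₗ F2op n ∘ₗ F3op n ∘ₗ F3op n) =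
      3 • (F3op n ∘ₗ F3op n ∘ₗ F2op n ∘ₗ F3op n) + F2op n ∘ₗ F3op n ∘ₗ F3op n ∘ₗ F3op n :=
  serre_F3F2_relation_general n
end
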